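/- arXiv:2011.08606 — 3 statements merged into one kernel-verified Lean document; each statement's English description precedes it below -/
import Mathlib

section
/- Let g : 2^V → [0,1] be a monotone submodular set function on a finite ground set V with g(∅) = 0, let OPT = max_{S ⊆ V, |S| ≤ k} g(S), and let c ∈ (0,1]. Suppose Ṽ is a random subset of V satisfying P(v ∈ Ṽ) ≥ c·g({v}) for every v ∈ V. Let Ṽ_s be the union of s independent copies of Ṽ, and let S*(Ṽ_s) be an optimal solution to max_{S ⊆ Ṽ_s, |S| ≤ k} g(S). Then for any ε₁, ε₂ ∈ (0,1], if s ≥ (k/(c·ε₂))·log(k/ε₁), we have E[g(S*(Ṽ_s))] ≥ (1−ε₁)·OPT − ε₂. -/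
/-!
Keep only the *large* elements `S₁ = {v ∈ S* | g {v} ≥ ε₂ / k}` of an optimal set `S*`: by
subadditivity the at most `k` small ones carry total value at most `ε₂`, so `g S₁ ≥ OPT - ε₂`.
A large element escapes all `s` independent samples with probability at most
`(1 - c ε₂ / k) ^ s ≤ exp (-s c ε₂ / k) ≤ ε₁ / k`. The set `S₁ ∩ Ṽ_s` is feasible, and by
subadditivity again it is worth at least `g S₁` minus the values of the escaped elements, whose
expectation is at most `k · OPT · ε₁ / k = ε₁ · OPT`.
-/

open MeasureTheory ProbabilityTheory Finset

/-- The optimal value of max_{S ⊆ W, |S| ≤ k} g(S). -/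
noncomputable def bestVal {V : Type*} [DecidableEq V]
    (g : Finset V → ℝ) (k : ℕ) (W : Finset V) : ℝ :=
  (W.powerset.filter (fun S => S.card ≤ k)).sup'
    ⟨∅, by simp⟩ g

section SetFunction

variable {V : Type*} [DecidableEq V]

def IsSubmodular (g : Finset V → ℝ) : Prop :=
  ∀ A B : Finset V, A ⊆ B → ∀ v ∉ B, g (insert v B) - g B ≤ g (insert v A) - g A

lemma le_bestVal (g : Finset V → ℝ) (k : ℕ) {T W : Finset V} (hTW : T ⊆ W) (hT : T.card ≤ k) :
    g T ≤ bestVal g k W :=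
  le_sup' g (mem_filter.2 ⟨mem_powerset.2 hTW, hT⟩)

lemma exists_bestVal_eq (g : Finset V → ℝ) (k : ℕ) (W : Finset V) :
    ∃ T ⊆ W, T.card ≤ k ∧ bestVal g k W = g T := by
  obtain ⟨T, hT, hval⟩ := exists_mem_eq_sup'
    (⟨∅, by simp⟩ : (W.powerset.filter fun S => S.card ≤ k).Nonempty) g
  rw [mem_filter, mem_powerset] at hT
  exact ⟨T, hT.1, hT.2, hval⟩

variable {g : Finset V → ℝ}

lemma IsSubmodular.le_add_sum_singleton (hsub : IsSubmodular g) (hempty : g ∅ = 0)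
    (hg0 : ∀ v, 0 ≤ g {v}) (A D : Finset V) : g (A ∪ D) ≤ g A + ∑ v ∈ D, g {v} := by
  induction D using Finset.induction_on with
  | empty => simp
  | insert v D hvD ih =>
    rw [union_insert, sum_insert hvD]
    by_cases hv : v ∈ A ∪ D
    · rw [insert_eq_self.2 hv]
      linarith [hg0 v]
    · have := hsub ∅ (A ∪ D) (empty_subset _) v hv
      rw [insert_empty, hempty, sub_zero] at this
      linarith

lemma IsSubmodular.sub_le_filter_large (hsub : IsSubmodular g) (hempty : g ∅ = 0)
    (hg0 : ∀ v, 0 ≤ g {v}) {S : Finset V} {k : ℕ} (hS : S.card ≤ k) {ε : ℝ} (hε : 0 ≤ ε) :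
    g S - ε ≤ g (S.filter fun v => ε / k ≤ g {v}) := by
  set small := S.filter fun v => ¬ ε / k ≤ g {v}
  have hsmall : ∑ v ∈ small, g {v} ≤ ε := calc
    ∑ v ∈ small, g {v} ≤ ∑ _v ∈ small, ε / k :=
      sum_le_sum fun v hv => (not_le.1 (mem_filter.1 hv).2).le
    _ = small.card * (ε / k) := by rw [sum_const, nsmul_eq_mul]
    _ ≤ k * (ε / k) := by gcongr; exact (card_filter_le _ _).trans hS
    _ ≤ ε := by
      rcases eq_or_ne (k : ℝ) 0 with hk | hk
      · simpa [hk] using hε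
      · rw [mul_div_cancel₀ _ hk]
  have := hsub.le_add_sum_singleton hempty hg0 (S.filter fun v => ε / k ≤ g {v}) small
  rw [filter_union_filter_not_eq] at this
  linarith

lemma IsSubmodular.sub_sum_sdiff_le_bestVal (hsub : IsSubmodular g) (hempty : g ∅ = 0)
    (hg0 : ∀ v, 0 ≤ g {v}) {k : ℕ} {T : Finset V} (hT : T.card ≤ k) (W : Finset V) :
    g T - ∑ v ∈ T \ W, g {v} ≤ bestVal g k W := by
  have hfeas : g (T ∩ W) ≤ bestVal g k W :=
    le_bestVal g k inter_subset_right ((card_le_card inter_subset_left).trans hT)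
  have := hsub.le_add_sum_singleton hempty hg0 (T ∩ W) (T \ W)
  rw [union_comm, sdiff_union_inter] at this
  linarith

end SetFunction

lemma Real.exp_neg_mul_le_of_mul_log_le {k c ε₁ ε₂ s x : ℝ} (hk : 0 < k) (hc : 0 < c)
    (hε₁ : 0 < ε₁) (hε₂ : 0 < ε₂) (hs0 : 0 ≤ s) (hs : k / (c * ε₂) * Real.log (k / ε₁) ≤ s)
    (hx : ε₂ / k ≤ x) : Real.exp (-(s * (c * x))) ≤ ε₁ / k := by
  have hlog : Real.log (k / ε₁) ≤ s * (c * x) := calc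
    Real.log (k / ε₁) = k / (c * ε₂) * Real.log (k / ε₁) * (c * (ε₂ / k)) := by field_simp
    _ ≤ s * (c * (ε₂ / k)) := by gcongr
    _ ≤ s * (c * x) := by gcongr
  calc Real.exp (-(s * (c * x))) ≤ Real.exp (-Real.log (k / ε₁)) := by gcongr
    _ = ε₁ / k := by rw [Real.exp_neg, Real.exp_log (by positivity), inv_div]

section Probability

variable {Ω : Type*} [MeasurableSpace Ω] {μ : Measure Ω} [IsProbabilityMeasure μ]

lemma measureReal_iInter_compl_le_exp {ι : Type*} [Fintype ι] {E : ι → Set Ω}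
    (hE : ∀ i, MeasurableSet (E i)) (hind : iIndepSet E μ) {p : ℝ} (hp : ∀ i, p ≤ μ.real (E i)) :
    μ.real (⋂ i, (E i)ᶜ) ≤ Real.exp (-(Fintype.card ι * p)) := by
  have hprod : μ (⋂ i, (E i)ᶜ) = ∏ i, μ (E i)ᶜ :=
    ((iIndepSet_iff_iIndep _ _).1 hind).meas_iInter
      fun i => (MeasurableSpace.measurableSet_generateFrom (Set.mem_singleton _)).compl
  calc μ.real (⋂ i, (E i)ᶜ) = ∏ i, μ.real (E i)ᶜ := by
        rw [measureReal_def, hprod, ENNReal.toReal_prod]; rfl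
    _ ≤ ∏ _i : ι, Real.exp (-p) := prod_le_prod (fun _ _ => measureReal_nonneg) fun i _ => by
        rw [probReal_compl_eq_one_sub (hE i)]
        linarith [Real.one_sub_le_exp_neg p, hp i]
    _ = Real.exp (-(Fintype.card ι * p)) := by
        rw [prod_const, ← Real.exp_nat_mul, card_univ]; ring_nf

variable {V : Type*} [DecidableEq V] {g : Finset V → ℝ}

lemma IsSubmodular.sub_sum_mul_le_integral_bestVal (hsub : IsSubmodular g) (hempty : g ∅ = 0)
    (hg0 : ∀ v, 0 ≤ g {v}) {k : ℕ} {X : Ω → Finset V} (hX : ∀ v, MeasurableSet {ω | v ∈ X ω})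
    (hint : Integrable (fun ω => bestVal g k (X ω)) μ) {T : Finset V} (hT : T.card ≤ k) :
    g T - ∑ v ∈ T, g {v} * μ.real {ω | v ∉ X ω} ≤ ∫ ω, bestVal g k (X ω) ∂μ := by
  have hmissed : ∀ ω, ∑ v ∈ T \ X ω, g {v} =
      ∑ v ∈ T, {ω | v ∉ X ω}.indicator (fun _ => g {v}) ω := fun ω => by
    simp [sdiff_eq_filter, sum_filter, Set.indicator_apply]
  have hint_missed : ∀ v ∈ T, Integrable ({ω | v ∉ X ω}.indicator fun _ => g {v}) μ :=
    fun v _ => (integrable_const _).indicator (hX v).compl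
  calc g T - ∑ v ∈ T, g {v} * μ.real {ω | v ∉ X ω}
      = ∫ ω, g T - ∑ v ∈ T \ X ω, g {v} ∂μ := by
        simp_rw [hmissed]
        rw [integral_sub (integrable_const _) (integrable_finsetSum _ hint_missed),
          integral_finsetSum _ hint_missed, integral_const]
        simp only [probReal_univ, smul_eq_mul, one_mul]
        congr 1
        refine sum_congr rfl fun v _ => ?_
        rw [integral_indicator_const (s := {ω | v ∉ X ω}) _ (hX v).compl, smul_eq_mul, mul_comm]
    _ ≤ ∫ ω, bestVal g k (X ω) ∂μ := by
        refine integral_mono ?_ hint fun ω => hsub.sub_sum_sdiff_le_bestVal hempty hg0 hT (X ω)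
        simp_rw [hmissed]
        exact (integrable_const _).sub (integrable_finsetSum _ hint_missed)

lemma measurableSet_mem_biUnion {ι : Type*} [Fintype ι] {X : ι → Ω → Finset V}
    (hX : ∀ i v, MeasurableSet {ω | v ∈ X i ω}) (v : V) :
    MeasurableSet {ω | v ∈ univ.biUnion (X · ω)} := by
  simp only [mem_biUnion, mem_univ, true_and, Set.ofPred_exists]
  exact .iUnion (hX · v)

lemma measureReal_not_mem_biUnion_le_exp {ι : Type*} [Fintype ι] {X : ι → Ω → Finset V} {v : V}
    (hX : ∀ i, MeasurableSet {ω | v ∈ X i ω}) (hind : iIndepSet (fun i => {ω | v ∈ X i ω}) μ)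
    {p : ℝ} (hp : ∀ i, p ≤ μ.real {ω | v ∈ X i ω}) :
    μ.real {ω | v ∉ univ.biUnion (X · ω)} ≤ Real.exp (-(Fintype.card ι * p)) := by
  have hset : {ω | v ∉ univ.biUnion (X · ω)} = ⋂ i, {ω | v ∈ X i ω}ᶜ := by ext ω; simp
  rw [hset]
  exact measureReal_iInter_compl_le_exp hX hind hp

end Probability

theorem stmt_0_general {V : Type*} [Fintype V] [DecidableEq V]
    {Ω : Type*} [MeasurableSpace Ω] (μ : Measure Ω) [IsProbabilityMeasure μ]
    (g : Finset V → ℝ)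
    (hg01 : ∀ S, 0 ≤ g S ∧ g S ≤ 1)
    (hsub : ∀ A B : Finset V, A ⊆ B → ∀ v ∉ B,
      g (insert v B) - g B ≤ g (insert v A) - g A)
    (hempty : g ∅ = 0)
    (k : ℕ) (hk : 1 ≤ k)
    (c : ℝ) (hc0 : 0 < c)
    (ε₁ ε₂ : ℝ) (hε₁ : ε₁ ∈ Set.Ioc (0:ℝ) 1) (hε₂ : ε₂ ∈ Set.Ioc (0:ℝ) 1)
    (s : ℕ)
    (hslb : (s : ℝ) ≥ (k : ℝ) / (c * ε₂) * Real.log ((k : ℝ) / ε₁))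
    (Vt : Fin s → Ω → Finset V)
    (hmeas : ∀ i (v : V), MeasurableSet {ω | v ∈ Vt i ω})
    -- for each item, the s inclusion events are independent (i.i.d. copies)
    (hindep : ∀ v : V, iIndepSet (fun i : Fin s => {ω | v ∈ Vt i ω}) μ)
    -- each copy includes v with probability at least c·g({v})
    (hprob : ∀ i (v : V), c * g {v} ≤ (μ {ω | v ∈ Vt i ω}).toReal)
    (Vs : Ω → Finset V)
    (hVs : ∀ ω, Vs ω = Finset.univ.biUnion (fun i : Fin s => Vt i ω))
    (hint : Integrable (fun ω => bestVal g k (Vs ω)) μ) :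
    ∫ ω, bestVal g k (Vs ω) ∂μ ≥
      (1 - ε₁) * bestVal g k (Finset.univ : Finset V) - ε₂ := by
  obtain rfl : Vs = fun ω => univ.biUnion (Vt · ω) := funext hVs
  obtain ⟨hε₁0, -⟩ := hε₁
  obtain ⟨hε₂0, -⟩ := hε₂
  have hg0 : ∀ v : V, 0 ≤ g {v} := fun v => (hg01 {v}).1
  have hk0 : (0 : ℝ) < k := by exact_mod_cast hk
  obtain ⟨S, -, hScard, hS⟩ := exists_bestVal_eq g k univ
  set OPT := bestVal g k univ
  have hOPT0 : 0 ≤ OPT := hS ▸ (hg01 S).1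
  set S₁ := S.filter fun v => ε₂ / k ≤ g {v}
  have hS₁card : #S₁ ≤ k := (card_filter_le _ _).trans hScard
  have hescape : ∀ v ∈ S₁, μ.real {ω | v ∉ univ.biUnion (Vt · ω)} ≤ ε₁ / k := fun v hv =>
    (measureReal_not_mem_biUnion_le_exp (hmeas · v) (hindep v) (hprob · v)).trans <| by
      simpa using Real.exp_neg_mul_le_of_mul_log_le hk0 hc0 hε₁0 hε₂0 s.cast_nonneg hslb
        (mem_filter.1 hv).2
  have hloss : ∑ v ∈ S₁, g {v} * μ.real {ω | v ∉ univ.biUnion (Vt · ω)} ≤ ε₁ * OPT := calc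
    _ ≤ #S₁ • (OPT * (ε₁ / k)) := sum_le_card_nsmul _ _ _ fun v hv =>
        mul_le_mul (le_bestVal g k (subset_univ _) (by simpa using hk)) (hescape v hv)
          measureReal_nonneg hOPT0
    _ ≤ k * (OPT * (ε₁ / k)) := by rw [nsmul_eq_mul]; gcongr
    _ = ε₁ * OPT := by field_simp
  have hlarge : OPT - ε₂ ≤ g S₁ :=
    hS ▸ IsSubmodular.sub_le_filter_large hsub hempty hg0 hScard hε₂0.le
  linarith [IsSubmodular.sub_sum_mul_le_integral_bestVal hsub hempty hg0
    (measurableSet_mem_biUnion hmeas) hint hS₁card]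

/-- Lemma 1 of the paper: sampling preserves near-optimality.
If each of s i.i.d. random subsets includes every v with probability at least
c·g({v}), and s ≥ (k/(cε₂))·log(k/ε₁), then optimizing g over the union Ṽ_s
of the copies gives E[g(S*(Ṽ_s))] ≥ (1−ε₁)·OPT − ε₂. -/
theorem stmt_0 {V : Type*} [Fintype V] [DecidableEq V]
    {Ω : Type*} [MeasurableSpace Ω] (μ : Measure Ω) [IsProbabilityMeasure μ]
    (g : Finset V → ℝ)
    (hg01 : ∀ S, 0 ≤ g S ∧ g S ≤ 1)
    (hmono : ∀ A B : Finset V, A ⊆ B → g A ≤ g B)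
    (hsub : ∀ A B : Finset V, A ⊆ B → ∀ v ∉ B,
      g (insert v B) - g B ≤ g (insert v A) - g A)
    (hempty : g ∅ = 0)
    (k : ℕ) (hk : 1 ≤ k)
    (c : ℝ) (hc0 : 0 < c) (hc1 : c ≤ 1)
    (ε₁ ε₂ : ℝ) (hε₁ : ε₁ ∈ Set.Ioc (0:ℝ) 1) (hε₂ : ε₂ ∈ Set.Ioc (0:ℝ) 1)
    (s : ℕ) (hs : 0 < s)
    (hslb : (s : ℝ) ≥ (k : ℝ) / (c * ε₂) * Real.log ((k : ℝ) / ε₁))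
    (Vt : Fin s → Ω → Finset V)
    (hmeas : ∀ i (v : V), MeasurableSet {ω | v ∈ Vt i ω})
    -- for each item, the s inclusion events are independent (i.i.d. copies)
    (hindep : ∀ v : V, iIndepSet (fun i : Fin s => {ω | v ∈ Vt i ω}) μ)
    -- each copy includes v with probability at least c·g({v})
    (hprob : ∀ i (v : V), c * g {v} ≤ (μ {ω | v ∈ Vt i ω}).toReal)
    (Vs : Ω → Finset V)
    (hVs : ∀ ω, Vs ω = Finset.univ.biUnion (fun i : Fin s => Vt i ω))
    (hint : Integrable (fun ω => bestVal g k (Vs ω)) μ) :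
    ∫ ω, bestVal g k (Vs ω) ∂μ ≥
      (1 - ε₁) * bestVal g k (Finset.univ : Finset V) - ε₂ :=
  stmt_0_general μ g hg01 hsub hempty k hk c hc0 ε₁ ε₂ hε₁ hε₂ s hslb Vt hmeas hindep hprob Vs hVs
    hint
end

section
/- Let μ : ℝ≥0 → ℝ≥0 be non-increasing, let (ε_v)_{v∈V} and ε_∅ be i.i.d. real random variables, and define f(S,u) = P( max_{v∈S} (μ(d(v,u)) + ε_v) > ε_∅ ) for subsets S of a finite metric space V and a fixed point u, with f(∅,u) = 0. Then f(·, u) is a monotone submodular set function on 2^V. -/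
open MeasureTheory ProbabilityTheory Finset

/-!
The event `max_{v ∈ S} (μ(d(v,u)) + ε_v) > ε_∅` is the union over `v ∈ S` of the events
`D v = {μ(d(v,u)) + ε_v > ε_∅}`, so `f` is a coverage function `S ↦ P(⋃_{v ∈ S} D v)`.
Such a function is monotone, and the gain of adding `v` to `S` is `P(D v \ ⋃_{w ∈ S} D w)`,
which can only shrink as `S` grows.
-/

section Coverage

variable {ι Ω : Type*} [MeasurableSpace Ω] (P : Measure Ω) [IsFiniteMeasure P] (D : ι → Set Ω)

theorem measureReal_biUnion_finset_mono {A B : Finset ι} (hAB : A ⊆ B) :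
    P.real (⋃ i ∈ A, D i) ≤ P.real (⋃ i ∈ B, D i) :=
  measureReal_mono (Set.biUnion_subset_biUnion_left hAB) (measure_ne_top P _)

theorem measureReal_biUnion_insert_sub [DecidableEq ι] (hD : ∀ i, MeasurableSet (D i))
    (v : ι) (S : Finset ι) :
    P.real (⋃ i ∈ insert v S, D i) - P.real (⋃ i ∈ S, D i) = P.real (D v \ ⋃ i ∈ S, D i) := by
  have hE : MeasurableSet (⋃ i ∈ S, D i) := S.measurableSet_biUnion fun i _ => hD i
  rw [Finset.set_biUnion_insert, Set.union_comm, ← Set.union_sdiff_self,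
    measureReal_union' Set.disjoint_sdiff_right hE (measure_ne_top P _) (measure_ne_top P _),
    add_sub_cancel_left]

theorem measureReal_biUnion_insert_sub_antitone [DecidableEq ι]
    (hD : ∀ i, MeasurableSet (D i)) {A B : Finset ι} (hAB : A ⊆ B) (v : ι) :
    P.real (⋃ i ∈ insert v B, D i) - P.real (⋃ i ∈ B, D i) ≤
      P.real (⋃ i ∈ insert v A, D i) - P.real (⋃ i ∈ A, D i) := by
  rw [measureReal_biUnion_insert_sub P D hD, measureReal_biUnion_insert_sub P D hD]
  exact measureReal_mono
    (Set.sdiff_subset_sdiff_right (Set.biUnion_subset_biUnion_left hAB)) (measure_ne_top P _)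

end Coverage

theorem stmt_13_general {𝓜 : Type*} [MetricSpace 𝓜] [DecidableEq 𝓜]
    (V : Finset 𝓜) (u : 𝓜)
    (μutil : ℝ → ℝ)
    {Ω : Type*} [MeasurableSpace Ω] (P : Measure Ω) [IsProbabilityMeasure P]
    -- the noise terms: ε (some v) is ε_v for v ∈ V, and ε none is ε_∅
    (ε : Option ↥V → Ω → ℝ)
    (hεmeas : ∀ i, Measurable (ε i))
    (f : Finset ↥V → ℝ)
    (hf : ∀ S : Finset ↥V,
      f S = (P {ω | ∃ v ∈ S, μutil (dist (v : 𝓜) u) + ε (some v) ω >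
        ε none ω}).toReal) :
    (∀ A B : Finset ↥V, A ⊆ B → f A ≤ f B) ∧
    (∀ A B : Finset ↥V, A ⊆ B → ∀ v ∉ B,
      f (insert v B) - f B ≤ f (insert v A) - f A) := by
  set D : ↥V → Set Ω := fun v => {ω | μutil (dist (v : 𝓜) u) + ε (some v) ω > ε none ω}
  have hD : ∀ v, MeasurableSet (D v) := fun v =>
    measurableSet_lt (hεmeas none) (measurable_const.add (hεmeas (some v)))
  have hfD : ∀ S, f S = P.real (⋃ v ∈ S, D v) := fun S => by
    rw [hf, Measure.real]
    congr 2
    ext ω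
    simp [D]
  simp only [hfD]
  exact ⟨fun A B hAB => measureReal_biUnion_finset_mono P D hAB,
    fun A B hAB v _ => measureReal_biUnion_insert_sub_antitone P D hD hAB v⟩

/-- The conversion function
f(S,u) = P(max_{v∈S}(μ(d(v,u)) + ε_v) > ε_∅) of a random utility model with
i.i.d. noise terms is a monotone submodular set function (f(∅,u)=0). -/
theorem stmt_13 {𝓜 : Type*} [MetricSpace 𝓜] [DecidableEq 𝓜]
    (V : Finset 𝓜) (u : 𝓜)
    (μutil : ℝ → ℝ) (hμ0 : ∀ x, 0 ≤ x → 0 ≤ μutil x)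
    (hμmono : ∀ x y, 0 ≤ x → x ≤ y → μutil y ≤ μutil x)
    {Ω : Type*} [MeasurableSpace Ω] (P : Measure Ω) [IsProbabilityMeasure P]
    -- the noise terms: ε (some v) is ε_v for v ∈ V, and ε none is ε_∅
    (ε : Option ↥V → Ω → ℝ)
    (hεmeas : ∀ i, Measurable (ε i))
    (hindep : iIndepFun ε P)
    (hident : ∀ i j, Measure.map (ε i) P = Measure.map (ε j) P)
    (f : Finset ↥V → ℝ)
    (hf : ∀ S : Finset ↥V,
      f S = (P {ω | ∃ v ∈ S, μutil (dist (v : 𝓜) u) + ε (some v) ω >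
        ε none ω}).toReal) :
    (∀ A B : Finset ↥V, A ⊆ B → f A ≤ f B) ∧
    (∀ A B : Finset ↥V, A ⊆ B → ∀ v ∉ B,
      f (insert v B) - f B ≤ f (insert v A) - f A) :=
  stmt_13_general V u μutil P ε hεmeas f hf
end

section
/- Fix w > 0, revenues r_j ∈ [r_min, r_max] with r_min, r_max > 0, and weights x_j > 0 for j ∈ V. Define f(S) = Σ_{j∈S} r_j·x_j/(w + Σ_{j∈S} x_j). If r_min / r_max ≥ max_{S⊆V, |S|≤k} Σ_{j∈S} x_j/(w + Σ_{j∈S} x_j), then f is monotone non-decreasing over subsets of cardinality at most k: for all S with |S| < k and v ∉ S, f(S ∪ {v}) ≥ f(S). -/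
open Finset

/-- Monotonicity of the MNL expected revenue function under the
revenue-ratio condition. -/
theorem stmt_14 {V : Type*} [Fintype V] [DecidableEq V]
    (w : ℝ) (hw : 0 < w)
    (r x : V → ℝ) (rmin rmax : ℝ) (hrmin : 0 < rmin) (hrmax : 0 < rmax)
    (hr : ∀ j, rmin ≤ r j ∧ r j ≤ rmax)
    (hx : ∀ j, 0 < x j)
    (k : ℕ)
    (f : Finset V → ℝ)
    (hf : ∀ S : Finset V, f S = (∑ j ∈ S, r j * x j) / (w + ∑ j ∈ S, x j))
    (hcond : ∀ S : Finset V, S.card ≤ k →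
      (∑ j ∈ S, x j) / (w + ∑ j ∈ S, x j) ≤ rmin / rmax) :
    ∀ S : Finset V, S.card < k → ∀ v ∉ S, f S ≤ f (insert v S) := by
  intro S hSk v hv
  set X := ∑ j ∈ S, x j with hX
  set A := ∑ j ∈ S, r j * x j with hA
  have hX0 : 0 ≤ X := Finset.sum_nonneg fun j _ => (hx j).le
  have hwX : 0 < w + X := by linarith
  have hwXv : 0 < w + X + x v := by linarith [hx v]
  -- A ≤ rmax * X
  have hAle : A ≤ rmax * X := by
    rw [hA, hX, Finset.mul_sum]
    exact Finset.sum_le_sum fun j _ =>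
      mul_le_mul_of_nonneg_right (hr j).2 (hx j).le
  -- rmax * X ≤ rmin * (w + X)
  have hcondS := hcond S hSk.le
  have h2 : rmax * X ≤ rmin * (w + X) := by
    rw [div_le_div_iff₀ hwX hrmax] at hcondS
    linarith [hcondS]
  have hrv : A ≤ r v * (w + X) := by
    have := (hr v).1
    nlinarith [hwX]
  rw [hf S, hf (insert v S), Finset.sum_insert hv, Finset.sum_insert hv,
    ← hA, ← hX]
  rw [div_le_div_iff₀ hwX (by linarith [hx v] : (0:ℝ) < w + (x v + X))]
  nlinarith [hx v]
end
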